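/- Let p* ∈ (0, 1/2) and let r:𝒳→{0,1} be a measurable binary function such that r(x) = 1 whenever e(x) < p* and r(x) = 0 whenever e(x) > 1−p*. Define, for bounded measurable candidates τ̃, μ̃0, μ̃1 and measurable ẽ with 0 < ẽ(X) < 1 a.s. and with r(X)/(1−ẽ(X)) + (1−r(X))/ẽ(X) a.s. bounded, the residual Ψ[τ̃, ẽ, (μ̃0,μ̃1)] = (W·r(X) + (1−W)(1−r(X)))·τ̃(X) − (r(X)/(1−ẽ(X)) + (1−r(X))/ẽ(X))·(W−ẽ(X))·(Y − r(X)·μ̃0(X) − (1−r(X))·μ̃1(X)). Then, almost surely, E[Ψ[τ̃, e, (μ̃0,μ̃1)] | σ(X)] = E[Ψ[τ̃, ẽ, (μ0,μ1)] | σ(X)] = E[Ψ[τ̃, e, (μ0,μ1)] | σ(X)] = (r(X)·e(X) + (1−r(X))·(1−e(X)))·(τ̃(X)−τ(X)) (global double robustness), and these vanish a.s. if and only if τ̃(X) = τ(X) a.s.; in particular, at the truth E[Ψ[τ, e, (μ0,μ1)] | σ(X)] = 0 a.s. with a.s. finite conditional variance. -/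

import Mathlib

open MeasureTheory ProbabilityTheory Filter Set

/-- The sub-σ-algebra σ(X) generated by a random element `X`. -/
abbrev sigmaAlg {Ω 𝒳 : Type*} [m𝒳 : MeasurableSpace 𝒳] (X : Ω → 𝒳) : MeasurableSpace Ω :=
  MeasurableSpace.comap X m𝒳

/-!
Because `W` is binary and `Y = W Y1 + (1 - W) Y0`, the residual splits into a treated and a
control arm, `W (a1 + b1 Y1) + (1 - W) (a0 + b0 Y0)`, with σ(X)-measurable coefficients.
Unconfoundedness factorises `E[W Y1 | X] = e μ1` and `E[(1 - W) Y0 | X] = (1 - e) μ0`, so pulling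
the coefficients out gives
`E[Ψ | X] = (r e + (1 - r)(1 - e)) (τ̃ - τ)
    + (e - ẽ) (r (μ̃0 - μ0) / (1 - ẽ) + (1 - r) (μ̃1 - μ1) / ẽ)`.
The remainder is a product of the propensity error and the outcome-regression error, so it
vanishes as soon as either nuisance is correct. Overlap makes the factor `r e + (1 - r)(1 - e)`
positive, which characterises the root `τ̃ = τ`; and the choice of `r` keeps the balancing weight
below `1 / p*`, so the residual at the truth is bounded, and so is its conditional second moment.
-/

open scoped ENNReal

section CondExp

variable {Ω : Type*} {m mΩ : MeasurableSpace Ω} {μ : Measure Ω}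

theorem MeasureTheory.MemLp.mul_top {f g : Ω → ℝ} (hf : MemLp f ∞ μ) (hg : MemLp g ∞ μ) :
    MemLp (fun ω => f ω * g ω) ∞ μ :=
  hg.mul' hf

theorem MeasureTheory.MemLp.exists_condExp_sq_ae_le {f : Ω → ℝ} (hf : MemLp f ∞ μ) :
    ∃ C : ℝ, ∀ᵐ ω ∂μ, μ[fun ω => f ω ^ 2 | m] ω ≤ C := by
  have hsq : MemLp (fun ω => f ω ^ 2) ∞ μ := by simpa only [sq] using hf.mul_top hf
  refine ⟨lpNorm (fun ω => f ω ^ 2) ∞ μ, ?_⟩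
  filter_upwards [ae_bdd_abs_condExp_of_ae_bdd_abs (m := m) (ae_le_lpNorm_exponent_top hsq)]
    with ω h
  exact (le_abs_self _).trans h

variable [IsFiniteMeasure μ]

theorem condExp_mul_affine_ae_eq {A Z a b : Ω → ℝ}
    (ha : StronglyMeasurable[m] a) (hb : StronglyMeasurable[m] b)
    (ha' : MemLp a ∞ μ) (hb' : MemLp b ∞ μ) (hA : MemLp A ∞ μ) (hZ : MemLp Z ∞ μ) :
    μ[fun ω => A ω * (a ω + b ω * Z ω) | m]
      =ᵐ[μ] fun ω => a ω * μ[A | m] ω + b ω * μ[A * Z | m] ω := by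
  have hAZ : MemLp (A * Z) ∞ μ := hA.mul_top hZ
  have haA : Integrable (a * A) μ := (ha'.mul_top hA).integrable le_top
  have hbAZ : Integrable (b * (A * Z)) μ := (hb'.mul_top hAZ).integrable le_top
  have hsplit : (fun ω => A ω * (a ω + b ω * Z ω)) = a * A + b * (A * Z) := by
    funext ω
    simp only [Pi.add_apply, Pi.mul_apply]
    ring
  rw [hsplit]
  filter_upwards [condExp_add haA hbAZ m,
    condExp_mul_of_stronglyMeasurable_left ha haA (hA.integrable le_top),
    condExp_mul_of_stronglyMeasurable_left hb hbAZ (hAZ.integrable le_top)] with ω h h₁ h₂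
  rw [h, Pi.add_apply, h₁, h₂, Pi.mul_apply, Pi.mul_apply]

theorem condExp_one_sub_ae_eq (hm : m ≤ mΩ) {f : Ω → ℝ} (hf : Integrable f μ) :
    μ[fun ω => 1 - f ω | m] =ᵐ[μ] fun ω => 1 - μ[f | m] ω := by
  filter_upwards [condExp_sub (integrable_const (1 : ℝ)) hf m] with ω h
  rw [show (fun ω => 1 - f ω) = (fun _ => (1 : ℝ)) - f from rfl, h, Pi.sub_apply,
    condExp_const hm]

/-- Conditional independence given `m` is independence under almost every conditional law
`condExpKernel μ m ω`, where the product rule for integrals applies. -/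
theorem ProbabilityTheory.CondIndepFun.condExp_mul_ae_eq [StandardBorelSpace Ω] {hm : m ≤ mΩ}
    {f g : Ω → ℝ} (h : CondIndepFun m hm f g μ) (hf : Measurable f) (hg : Measurable g)
    (hfi : Integrable f μ) (hgi : Integrable g μ) (hfgi : Integrable (f * g) μ) :
    μ[f * g | m] =ᵐ[μ] μ[f | m] * μ[g | m] := by
  have hker : ∀ᵐ ω ∂μ, f ⟂ᵢ[condExpKernel μ m ω] g := by
    filter_upwards [ae_of_ae_trim hm ((condIndepFun_iff_map_prod_eq_prod_map_map hf hg).1 h)]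
      with ω hω
    rw [Kernel.map_apply _ (hf.prodMk hg), Kernel.prod_apply, Kernel.map_apply _ hf,
      Kernel.map_apply _ hg] at hω
    exact (indepFun_iff_map_prod_eq_prod_map_map hf.aemeasurable hg.aemeasurable).2 hω
  filter_upwards [condExp_ae_eq_integral_condExpKernel hm hfgi,
    condExp_ae_eq_integral_condExpKernel hm hfi, condExp_ae_eq_integral_condExpKernel hm hgi,
    hker] with ω hfg hf' hg' hind
  rw [hfg, Pi.mul_apply, hf', hg']
  exact hind.integral_mul_eq_mul_integral hf.aestronglyMeasurable hg.aestronglyMeasurable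

end CondExp

noncomputable def balancingWeight {𝒳 : Type*} (r e : 𝒳 → ℝ) (x : 𝒳) : ℝ :=
  r x / (1 - e x) + (1 - r x) / e x

/-- The paper's `Ψ[τ̃, ẽ, (μ̃0, μ̃1)]` is `drResidual X W Y r τ̃ ẽ μ̃0 μ̃1`. -/
noncomputable def drResidual {Ω 𝒳 : Type*} (X : Ω → 𝒳) (W Y : Ω → ℝ) (r τ e m0 m1 : 𝒳 → ℝ)
    (ω : Ω) : ℝ :=
  (W ω * r (X ω) + (1 - W ω) * (1 - r (X ω))) * τ (X ω)
    - balancingWeight r e (X ω) * (W ω - e (X ω))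
      * (Y ω - r (X ω) * m0 (X ω) - (1 - r (X ω)) * m1 (X ω))

section Weights

variable {𝒳 : Type*} {r e : 𝒳 → ℝ}

theorem balancingWeight_nonneg (hrbin : ∀ x, r x = 0 ∨ r x = 1) {x : 𝒳}
    (he : 0 < e x ∧ e x < 1) : 0 ≤ balancingWeight r e x := by
  rcases hrbin x with h | h <;> simp only [balancingWeight, h] <;> norm_num <;> linarith

theorem balancingWeight_le_inv {p : ℝ} (hp : 0 < p) (hrbin : ∀ x, r x = 0 ∨ r x = 1)
    (hr1 : ∀ x, e x < p → r x = 1) (hr0 : ∀ x, 1 - p < e x → r x = 0) (x : 𝒳) :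
    balancingWeight r e x ≤ p⁻¹ := by
  rcases hrbin x with h | h
  · have : p ≤ e x := not_lt.1 fun hlt => by simp [hr1 x hlt] at h
    simpa [balancingWeight, h] using inv_anti₀ hp this
  · have : p ≤ 1 - e x := by
      by_contra! hlt
      simp [hr0 x (by linarith)] at h
    simpa [balancingWeight, h] using inv_anti₀ hp this

theorem mul_add_one_sub_mul_one_sub_pos (hrbin : ∀ x, r x = 0 ∨ r x = 1) {x : 𝒳}
    (he : 0 < e x ∧ e x < 1) : 0 < r x * e x + (1 - r x) * (1 - e x) := by
  rcases hrbin x with h | h <;> simp only [h] <;> linarith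

end Weights

@[fun_prop]
theorem measurable_balancingWeight {𝒳 : Type*} [MeasurableSpace 𝒳] {r e : 𝒳 → ℝ}
    (hr : Measurable r) (he : Measurable e) : Measurable (balancingWeight r e) :=
  (hr.div (measurable_const.sub he)).add ((measurable_const.sub hr).div he)

theorem drResidual_eq_arms {Ω 𝒳 : Type*} {X : Ω → 𝒳} {W Y Y0 Y1 : Ω → ℝ} {r τ e m0 m1 : 𝒳 → ℝ}
    (hWbin : ∀ ω, W ω = 0 ∨ W ω = 1)
    (hSUTVA : ∀ ω, Y ω = W ω * Y1 ω + (1 - W ω) * Y0 ω) :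
    drResidual X W Y r τ e m0 m1 = fun ω =>
      W ω * ((r (X ω) * τ (X ω) + balancingWeight r e (X ω) * (1 - e (X ω))
          * (r (X ω) * m0 (X ω) + (1 - r (X ω)) * m1 (X ω)))
        + -(balancingWeight r e (X ω) * (1 - e (X ω))) * Y1 ω)
      + (1 - W ω) * (((1 - r (X ω)) * τ (X ω) - balancingWeight r e (X ω) * e (X ω)
          * (r (X ω) * m0 (X ω) + (1 - r (X ω)) * m1 (X ω)))
        + balancingWeight r e (X ω) * e (X ω) * Y0 ω) := by
  funext ω
  rw [drResidual, hSUTVA ω]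
  rcases hWbin ω with h | h <;> rw [h] <;> ring

section Model

variable {Ω 𝒳 : Type*} {mΩ : MeasurableSpace Ω} [MeasurableSpace 𝒳] {P : Measure Ω}
  {X : Ω → 𝒳} {W Y Y0 Y1 : Ω → ℝ} {r τ e m0 m1 : 𝒳 → ℝ}

theorem memLp_top_comp (hX : Measurable X) {φ : 𝒳 → ℝ} (hφ : Measurable φ) {C : ℝ}
    (hC : ∀ᵐ ω ∂P, |φ (X ω)| ≤ C) : MemLp (fun ω => φ (X ω)) ∞ P :=
  memLp_top_of_bound (hφ.comp hX).aestronglyMeasurable C hC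

theorem memLp_top_balancingWeight (hX : Measurable X) (hrm : Measurable r)
    (hrbin : ∀ x, r x = 0 ∨ r x = 1) (hem : Measurable e)
    (heov : ∀ᵐ ω ∂P, 0 < e (X ω) ∧ e (X ω) < 1) {M : ℝ}
    (hM : ∀ᵐ ω ∂P, balancingWeight r e (X ω) ≤ M) :
    MemLp (fun ω => balancingWeight r e (X ω)) ∞ P := by
  refine memLp_top_comp hX (measurable_balancingWeight hrm hem) (C := M) ?_
  filter_upwards [heov, hM] with ω hov hle
  rwa [abs_of_nonneg (balancingWeight_nonneg hrbin hov)]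

theorem memLp_top_drResidual (hX : Measurable X)
    (hW : MemLp W ∞ P) (hY0 : MemLp Y0 ∞ P) (hY1 : MemLp Y1 ∞ P)
    (hSUTVA : ∀ ω, Y ω = W ω * Y1 ω + (1 - W ω) * Y0 ω)
    (hrm : Measurable r) (hrbin : ∀ x, r x = 0 ∨ r x = 1)
    (hτm : Measurable τ) {Cτ : ℝ} (hτ : ∀ x, |τ x| ≤ Cτ)
    (hm0m : Measurable m0) (hm1m : Measurable m1) {Cm : ℝ} (hm : ∀ x, |m0 x| ≤ Cm ∧ |m1 x| ≤ Cm)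
    (hem : Measurable e) (heov : ∀ᵐ ω ∂P, 0 < e (X ω) ∧ e (X ω) < 1)
    {M : ℝ} (hM : ∀ᵐ ω ∂P, balancingWeight r e (X ω) ≤ M) :
    MemLp (drResidual X W Y r τ e m0 m1) ∞ P := by
  have hR := memLp_top_comp (P := P) hX hrm (C := 1)
    (ae_of_all _ fun ω => by rcases hrbin (X ω) with h | h <;> simp [h])
  have hT := memLp_top_comp (P := P) hX hτm (ae_of_all _ fun ω => hτ (X ω))
  have hM0 := memLp_top_comp (P := P) hX hm0m (ae_of_all _ fun ω => (hm (X ω)).1)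
  have hM1 := memLp_top_comp (P := P) hX hm1m (ae_of_all _ fun ω => (hm (X ω)).2)
  have hE := memLp_top_comp hX hem (C := 1)
    (heov.mono fun ω h => abs_le.2 ⟨by linarith, by linarith⟩)
  have hB := memLp_top_balancingWeight hX hrm hrbin hem heov hM
  have h1R := (memLp_top_const 1).sub hR
  have h1W := (memLp_top_const 1).sub hW
  have hY : MemLp Y ∞ P := by
    rw [show Y = fun ω => W ω * Y1 ω + (1 - W ω) * Y0 ω from funext hSUTVA]
    exact (hW.mul_top hY1).add (h1W.mul_top hY0)
  exact (((hW.mul_top hR).add (h1W.mul_top h1R)).mul_top hT).sub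
    ((hB.mul_top (hW.sub hE)).mul_top ((hY.sub (hR.mul_top hM0)).sub (h1R.mul_top hM1)))

theorem condExp_arms_ae_eq_of_condIndepFun [StandardBorelSpace Ω] [IsFiniteMeasure P]
    (hX : Measurable X) (hWm : Measurable W) (hW : MemLp W ∞ P)
    (hY0m : Measurable Y0) (hY0 : MemLp Y0 ∞ P) (hY1m : Measurable Y1) (hY1 : MemLp Y1 ∞ P)
    (hUnconf : CondIndepFun (sigmaAlg X) hX.comap_le W (fun ω => (Y0 ω, Y1 ω)) P)
    {μ0 μ1 : 𝒳 → ℝ} (hprop : P[W | sigmaAlg X] =ᵐ[P] fun ω => e (X ω))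
    (hμ0c : P[Y0 | sigmaAlg X] =ᵐ[P] fun ω => μ0 (X ω))
    (hμ1c : P[Y1 | sigmaAlg X] =ᵐ[P] fun ω => μ1 (X ω)) :
    (P[W * Y1 | sigmaAlg X] =ᵐ[P] fun ω => e (X ω) * μ1 (X ω)) ∧
      P[(fun ω => 1 - W ω) * Y0 | sigmaAlg X] =ᵐ[P] fun ω => (1 - e (X ω)) * μ0 (X ω) := by
  have h1W : MemLp (fun ω => 1 - W ω) ∞ P := (memLp_top_const 1).sub hW
  have hprop0 : P[fun ω => 1 - W ω | sigmaAlg X] =ᵐ[P] fun ω => 1 - e (X ω) :=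
    (condExp_one_sub_ae_eq hX.comap_le (hW.integrable le_top)).trans
      (hprop.mono fun ω h => congrArg (1 - ·) h)
  refine ⟨((hUnconf.comp measurable_id measurable_snd).condExp_mul_ae_eq hWm hY1m
    (hW.integrable le_top) (hY1.integrable le_top) ((hW.mul_top hY1).integrable le_top)).trans
    (hprop.mul hμ1c), ?_⟩
  exact ((hUnconf.comp (measurable_const.sub measurable_id) measurable_fst).condExp_mul_ae_eq
    (measurable_const.sub hWm) hY0m (h1W.integrable le_top) (hY0.integrable le_top)
    ((h1W.mul_top hY0).integrable le_top)).trans (hprop0.mul hμ0c)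

theorem condExp_drResidual_ae_eq [IsFiniteMeasure P] (hX : Measurable X)
    (hW : MemLp W ∞ P) (hWbin : ∀ ω, W ω = 0 ∨ W ω = 1)
    (hY0 : MemLp Y0 ∞ P) (hY1 : MemLp Y1 ∞ P) (hSUTVA : ∀ ω, Y ω = W ω * Y1 ω + (1 - W ω) * Y0 ω)
    {μ0 μ1 : 𝒳 → ℝ} (hprop : P[W | sigmaAlg X] =ᵐ[P] fun ω => e (X ω))
    (h1 : P[W * Y1 | sigmaAlg X] =ᵐ[P] fun ω => e (X ω) * μ1 (X ω))
    (h0 : P[(fun ω => 1 - W ω) * Y0 | sigmaAlg X] =ᵐ[P] fun ω => (1 - e (X ω)) * μ0 (X ω))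
    (hrm : Measurable r) (hrbin : ∀ x, r x = 0 ∨ r x = 1)
    (hτm : Measurable τ) {Cτ : ℝ} (hτ : ∀ x, |τ x| ≤ Cτ)
    (hm0m : Measurable m0) (hm1m : Measurable m1) {Cm : ℝ} (hm : ∀ x, |m0 x| ≤ Cm ∧ |m1 x| ≤ Cm)
    {et : 𝒳 → ℝ} (hetm : Measurable et) (hetov : ∀ᵐ ω ∂P, 0 < et (X ω) ∧ et (X ω) < 1)
    {Mb : ℝ} (hMb : ∀ᵐ ω ∂P, balancingWeight r et (X ω) ≤ Mb) :
    P[drResidual X W Y r τ et m0 m1 | sigmaAlg X] =ᵐ[P] fun ω =>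
      (r (X ω) * e (X ω) + (1 - r (X ω)) * (1 - e (X ω))) * (τ (X ω) - (μ1 (X ω) - μ0 (X ω)))
        + (e (X ω) - et (X ω)) * (r (X ω) * (m0 (X ω) - μ0 (X ω)) / (1 - et (X ω))
          + (1 - r (X ω)) * (m1 (X ω) - μ1 (X ω)) / et (X ω)) := by
  have hXm : Measurable[sigmaAlg X] X := comap_measurable X
  have hR := memLp_top_comp (P := P) hX hrm (C := 1)
    (ae_of_all _ fun ω => by rcases hrbin (X ω) with h | h <;> simp [h])
  have hT := memLp_top_comp (P := P) hX hτm (ae_of_all _ fun ω => hτ (X ω))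
  have hM0 := memLp_top_comp (P := P) hX hm0m (ae_of_all _ fun ω => (hm (X ω)).1)
  have hM1 := memLp_top_comp (P := P) hX hm1m (ae_of_all _ fun ω => (hm (X ω)).2)
  have hE := memLp_top_comp hX hetm (C := 1)
    (hetov.mono fun ω h => abs_le.2 ⟨by linarith, by linarith⟩)
  have hB := memLp_top_balancingWeight hX hrm hrbin hetm hetov hMb
  have h1R := (memLp_top_const 1).sub hR
  have h1E := (memLp_top_const 1).sub hE
  have hC := (hR.mul_top hM0).add (h1R.mul_top hM1)
  have ha1 := (hR.mul_top hT).add ((hB.mul_top h1E).mul_top hC)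
  have hb1 := (hB.mul_top h1E).neg
  have ha0 := (h1R.mul_top hT).sub ((hB.mul_top hE).mul_top hC)
  have hb0 := hB.mul_top hE
  have h1W : MemLp (fun ω => 1 - W ω) ∞ P := (memLp_top_const 1).sub hW
  rw [drResidual_eq_arms hWbin hSUTVA]
  refine (condExp_add ((hW.mul_top (ha1.add (hb1.mul_top hY1))).integrable le_top)
    ((h1W.mul_top (ha0.add (hb0.mul_top hY0))).integrable le_top) _).trans ?_
  refine (EventuallyEq.add
    (condExp_mul_affine_ae_eq (Measurable.stronglyMeasurable (by fun_prop))
      (Measurable.stronglyMeasurable (by fun_prop)) ha1 hb1 hW hY1)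
    (condExp_mul_affine_ae_eq (Measurable.stronglyMeasurable (by fun_prop))
      (Measurable.stronglyMeasurable (by fun_prop)) ha0 hb0 h1W hY0)).trans ?_
  filter_upwards [hprop, h1, h0, condExp_one_sub_ae_eq hX.comap_le (hW.integrable le_top),
    hetov] with ω hW1 hWY1 hWY0 hW0 hov
  simp only [Pi.add_apply, Pi.sub_apply, Pi.neg_apply]
  rw [hWY1, hWY0, hW0, hW1]
  have : 1 - et (X ω) ≠ 0 := by linarith
  have : et (X ω) ≠ 0 := by linarith
  rcases hrbin (X ω) with h | h <;> simp only [h, balancingWeight] <;> field_simp <;> ring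

theorem condExp_drResidual_ae_eq_of_correct [IsFiniteMeasure P] (hX : Measurable X)
    (hW : MemLp W ∞ P) (hWbin : ∀ ω, W ω = 0 ∨ W ω = 1)
    (hY0 : MemLp Y0 ∞ P) (hY1 : MemLp Y1 ∞ P) (hSUTVA : ∀ ω, Y ω = W ω * Y1 ω + (1 - W ω) * Y0 ω)
    {μ0 μ1 : 𝒳 → ℝ} (hprop : P[W | sigmaAlg X] =ᵐ[P] fun ω => e (X ω))
    (h1 : P[W * Y1 | sigmaAlg X] =ᵐ[P] fun ω => e (X ω) * μ1 (X ω))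
    (h0 : P[(fun ω => 1 - W ω) * Y0 | sigmaAlg X] =ᵐ[P] fun ω => (1 - e (X ω)) * μ0 (X ω))
    (hrm : Measurable r) (hrbin : ∀ x, r x = 0 ∨ r x = 1)
    (hτm : Measurable τ) {Cτ : ℝ} (hτ : ∀ x, |τ x| ≤ Cτ)
    (hm0m : Measurable m0) (hm1m : Measurable m1) {Cm : ℝ} (hm : ∀ x, |m0 x| ≤ Cm ∧ |m1 x| ≤ Cm)
    {et : 𝒳 → ℝ} (hetm : Measurable et) (hetov : ∀ᵐ ω ∂P, 0 < et (X ω) ∧ et (X ω) < 1)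
    {Mb : ℝ} (hMb : ∀ᵐ ω ∂P, balancingWeight r et (X ω) ≤ Mb)
    (hcorrect : ∀ᵐ ω ∂P, et (X ω) = e (X ω) ∨ m0 (X ω) = μ0 (X ω) ∧ m1 (X ω) = μ1 (X ω)) :
    P[drResidual X W Y r τ et m0 m1 | sigmaAlg X] =ᵐ[P] fun ω =>
      (r (X ω) * e (X ω) + (1 - r (X ω)) * (1 - e (X ω))) * (τ (X ω) - (μ1 (X ω) - μ0 (X ω))) := by
  filter_upwards [condExp_drResidual_ae_eq hX hW hWbin hY0 hY1 hSUTVA hprop h1 h0 hrm hrbin hτm hτ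
    hm0m hm1m hm hetm hetov hMb, hcorrect] with ω h hω
  rcases hω with he | ⟨hμ0, hμ1⟩
  · simp [h, he]
  · simp [h, hμ0, hμ1]

end Model

theorem stmt_11
    {Ω 𝒳 : Type*} [MeasurableSpace Ω] [StandardBorelSpace Ω] [MeasurableSpace 𝒳]
    (P : Measure Ω) [IsProbabilityMeasure P]
    (X : Ω → 𝒳) (hX : Measurable X)
    (W : Ω → ℝ) (hWm : Measurable W) (hWbin : ∀ ω, W ω = 0 ∨ W ω = 1)
    (Y0 Y1 : Ω → ℝ) (hY0m : Measurable Y0) (hY1m : Measurable Y1)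
    (CY : ℝ) (hYbdd : ∀ ω, |Y0 ω| ≤ CY ∧ |Y1 ω| ≤ CY)
    (Y : Ω → ℝ) (hSUTVA : ∀ ω, Y ω = W ω * Y1 ω + (1 - W ω) * Y0 ω)
    (hUnconf : CondIndepFun (sigmaAlg X) hX.comap_le W (fun ω => (Y0 ω, Y1 ω)) P)
    (e : 𝒳 → ℝ) (hem : Measurable e)
    (hprop : P[W|sigmaAlg X] =ᵐ[P] (fun ω => e (X ω)))
    (hoverlap : ∀ᵐ ω ∂P, 0 < e (X ω) ∧ e (X ω) < 1)
    (μ0 μ1 : 𝒳 → ℝ) (hμ0m : Measurable μ0) (hμ1m : Measurable μ1)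
    (Cμ : ℝ) (hμbdd : ∀ x, |μ0 x| ≤ Cμ ∧ |μ1 x| ≤ Cμ)
    (hμ0c : P[Y0|sigmaAlg X] =ᵐ[P] (fun ω => μ0 (X ω)))
    (hμ1c : P[Y1|sigmaAlg X] =ᵐ[P] (fun ω => μ1 (X ω)))
    (pstar : ℝ) (hpstar : pstar ∈ Set.Ioo (0:ℝ) (1/2))
    (r : 𝒳 → ℝ) (hrm : Measurable r) (hrbin : ∀ x, r x = 0 ∨ r x = 1)
    (hr1 : ∀ x, e x < pstar → r x = 1) (hr0 : ∀ x, 1 - pstar < e x → r x = 0)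
    (τt m0t m1t : 𝒳 → ℝ) (hτtm : Measurable τt) (hm0tm : Measurable m0t) (hm1tm : Measurable m1t)
    (Cτt : ℝ) (hτtb : ∀ x, |τt x| ≤ Cτt)
    (Cmt : ℝ) (hmtb : ∀ x, |m0t x| ≤ Cmt ∧ |m1t x| ≤ Cmt)
    (et : 𝒳 → ℝ) (hetm : Measurable et)
    (hetov : ∀ᵐ ω ∂P, 0 < et (X ω) ∧ et (X ω) < 1)
    (Mb : ℝ) (hMb : ∀ᵐ ω ∂P, r (X ω) / (1 - et (X ω)) + (1 - r (X ω)) / et (X ω) ≤ Mb)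
    :
    (P[(fun ω => (W ω * r (X ω) + (1 - W ω) * (1 - r (X ω))) * τt (X ω) - (r (X ω) / (1 - e (X ω)) + (1 - r (X ω)) / e (X ω)) * (W ω - e (X ω)) * (Y ω - r (X ω) * m0t (X ω) - (1 - r (X ω)) * m1t (X ω)))|sigmaAlg X] =ᵐ[P] (fun ω => (r (X ω) * e (X ω) + (1 - r (X ω)) * (1 - e (X ω))) * (τt (X ω) - (μ1 (X ω) - μ0 (X ω))))) ∧
    (P[(fun ω => (W ω * r (X ω) + (1 - W ω) * (1 - r (X ω))) * τt (X ω) - (r (X ω) / (1 - et (X ω)) + (1 - r (X ω)) / et (X ω)) * (W ω - et (X ω)) * (Y ω - r (X ω) * μ0 (X ω) - (1 - r (X ω)) * μ1 (X ω)))|sigmaAlg X] =ᵐ[P] (fun ω => (r (X ω) * e (X ω) + (1 - r (X ω)) * (1 - e (X ω))) * (τt (X ω) - (μ1 (X ω) - μ0 (X ω))))) ∧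
    (P[(fun ω => (W ω * r (X ω) + (1 - W ω) * (1 - r (X ω))) * τt (X ω) - (r (X ω) / (1 - e (X ω)) + (1 - r (X ω)) / e (X ω)) * (W ω - e (X ω)) * (Y ω - r (X ω) * μ0 (X ω) - (1 - r (X ω)) * μ1 (X ω)))|sigmaAlg X] =ᵐ[P] (fun ω => (r (X ω) * e (X ω) + (1 - r (X ω)) * (1 - e (X ω))) * (τt (X ω) - (μ1 (X ω) - μ0 (X ω))))) ∧
    ((P[(fun ω => (W ω * r (X ω) + (1 - W ω) * (1 - r (X ω))) * τt (X ω) - (r (X ω) / (1 - e (X ω)) + (1 - r (X ω)) / e (X ω)) * (W ω - e (X ω)) * (Y ω - r (X ω) * m0t (X ω) - (1 - r (X ω)) * m1t (X ω)))|sigmaAlg X] =ᵐ[P] 0 ∧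
      P[(fun ω => (W ω * r (X ω) + (1 - W ω) * (1 - r (X ω))) * τt (X ω) - (r (X ω) / (1 - et (X ω)) + (1 - r (X ω)) / et (X ω)) * (W ω - et (X ω)) * (Y ω - r (X ω) * μ0 (X ω) - (1 - r (X ω)) * μ1 (X ω)))|sigmaAlg X] =ᵐ[P] 0 ∧
      P[(fun ω => (W ω * r (X ω) + (1 - W ω) * (1 - r (X ω))) * τt (X ω) - (r (X ω) / (1 - e (X ω)) + (1 - r (X ω)) / e (X ω)) * (W ω - e (X ω)) * (Y ω - r (X ω) * μ0 (X ω) - (1 - r (X ω)) * μ1 (X ω)))|sigmaAlg X] =ᵐ[P] 0) ↔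
      (∀ᵐ ω ∂P, τt (X ω) = μ1 (X ω) - μ0 (X ω))) ∧
    (P[(fun ω => (W ω * r (X ω) + (1 - W ω) * (1 - r (X ω))) * (fun x => μ1 x - μ0 x) (X ω) - (r (X ω) / (1 - e (X ω)) + (1 - r (X ω)) / e (X ω)) * (W ω - e (X ω)) * (Y ω - r (X ω) * μ0 (X ω) - (1 - r (X ω)) * μ1 (X ω)))|sigmaAlg X] =ᵐ[P] 0 ∧
      ∃ C : ℝ, ∀ᵐ ω ∂P,
        (P[(fun ω' => ((W ω' * r (X ω') + (1 - W ω') * (1 - r (X ω'))) * (fun x => μ1 x - μ0 x) (X ω') - (r (X ω') / (1 - e (X ω')) + (1 - r (X ω')) / e (X ω')) * (W ω' - e (X ω')) * (Y ω' - r (X ω') * μ0 (X ω') - (1 - r (X ω')) * μ1 (X ω'))) ^ 2)|sigmaAlg X]) ω ≤ C) := by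
  have hW : MemLp W ∞ P := memLp_top_of_bound hWm.aestronglyMeasurable 1
    (ae_of_all _ fun ω => by rcases hWbin ω with h | h <;> simp [h])
  have hY0 : MemLp Y0 ∞ P :=
    memLp_top_of_bound hY0m.aestronglyMeasurable CY (ae_of_all _ fun ω => (hYbdd ω).1)
  have hY1 : MemLp Y1 ∞ P :=
    memLp_top_of_bound hY1m.aestronglyMeasurable CY (ae_of_all _ fun ω => (hYbdd ω).2)
  obtain ⟨h1, h0⟩ := condExp_arms_ae_eq_of_condIndepFun hX hWm hW hY0m hY0 hY1m hY1 hUnconf hprop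
    hμ0c hμ1c
  have hwe : ∀ᵐ ω ∂P, balancingWeight r e (X ω) ≤ pstar⁻¹ :=
    ae_of_all _ fun ω => balancingWeight_le_inv hpstar.1 hrbin hr1 hr0 (X ω)
  have hτ : ∀ x, |μ1 x - μ0 x| ≤ Cμ + Cμ := fun x =>
    (abs_sub _ _).trans (add_le_add (hμbdd x).2 (hμbdd x).1)
  have hpropOk := condExp_drResidual_ae_eq_of_correct hX hW hWbin hY0 hY1 hSUTVA hprop h1 h0
    hrm hrbin hτtm hτtb hm0tm hm1tm hmtb hem hoverlap hwe (ae_of_all _ fun _ => Or.inl rfl)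
  have hregOk := condExp_drResidual_ae_eq_of_correct hX hW hWbin hY0 hY1 hSUTVA hprop h1 h0
    hrm hrbin hτtm hτtb hμ0m hμ1m hμbdd hetm hetov hMb (ae_of_all _ fun _ => Or.inr ⟨rfl, rfl⟩)
  have hbothOk := condExp_drResidual_ae_eq_of_correct hX hW hWbin hY0 hY1 hSUTVA hprop h1 h0
    hrm hrbin hτtm hτtb hμ0m hμ1m hμbdd hem hoverlap hwe (ae_of_all _ fun _ => Or.inl rfl)
  have htruth := condExp_drResidual_ae_eq_of_correct hX hW hWbin hY0 hY1 hSUTVA hprop h1 h0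
    hrm hrbin (hμ1m.sub hμ0m) hτ hμ0m hμ1m hμbdd hem hoverlap hwe (ae_of_all _ fun _ => Or.inl rfl)
  refine ⟨hpropOk, hregOk, hbothOk, ⟨fun ⟨_, _, h⟩ => ?_, fun h => ?_⟩,
    htruth.trans (ae_of_all _ fun ω => by simp), ?_⟩
  · filter_upwards [hbothOk.symm.trans h, hoverlap] with ω h hω
    exact sub_eq_zero.1 ((mul_eq_zero.1 h).resolve_left
      (mul_add_one_sub_mul_one_sub_pos hrbin hω).ne')
  · have hzero : (fun ω => (r (X ω) * e (X ω) + (1 - r (X ω)) * (1 - e (X ω)))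
        * (τt (X ω) - (μ1 (X ω) - μ0 (X ω)))) =ᵐ[P] 0 :=
      h.mono fun ω hω => by simp [hω]
    exact ⟨hpropOk.trans hzero, hregOk.trans hzero, hbothOk.trans hzero⟩
  · exact (memLp_top_drResidual hX hW hY0 hY1 hSUTVA hrm hrbin (hμ1m.sub hμ0m) hτ hμ0m hμ1m
      hμbdd hem hoverlap hwe).exists_condExp_sq_ae_le
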